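/- Let g : ℝ → ℝ be any map such that g(x) = x whenever x < −10 or x > 1, and g(x) = T₁(x) for all x ∈ [−1, 1]; define g̃ : ℝ → ℝ by g̃(x) = −g(−x). Then K₊ is forward invariant under the generated semigroup: every map f belonging to the submonoid of self-maps of ℝ (under composition) generated by {T₀, T₀⁻¹, g, g̃}, where T₀⁻¹(x) = 100x, satisfies f '' K₊ ⊆ K₊. -/

import Mathlib

noncomputable section

/-- The affine contraction of ratio 1/100 fixing 0. -/
def T0 (x : ℝ) : ℝ := x / 100

/-- The affine contraction of ratio 1/100 fixing 1. -/
def T1 (x : ℝ) : ℝ := 1 + (x - 1) / 100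

/-- The affine contraction of ratio 1/100 fixing -1. -/
def Tm1 (x : ℝ) : ℝ := -1 + (x + 1) / 100

/-- The inverse of `T0`. -/
def T0inv (x : ℝ) : ℝ := 100 * x

/-- The `i`-th iterate of `T0` for `i ≥ 0`, and the `|i|`-th iterate of
`T0⁻¹ : x ↦ 100 x` for `i < 0`. -/
def T0z : ℤ → ℝ → ℝ
  | Int.ofNat n => T0^[n]
  | Int.negSucc n => T0inv^[n + 1]

/-- The set `K₊ = {0} ∪ ⋃ i ∈ ℤ, T₀^[i] '' (C₁ ∪ C₋₁)` where `C₁ = T₁ '' C`,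
`C₋₁ = T₋₁ '' C`. -/
def Kplus (C : Set ℝ) : Set ℝ := {0} ∪ ⋃ i : ℤ, T0z i '' (T1 '' C ∪ Tm1 '' C)

/-!
Every generator maps `K₊` into itself, and these maps form a submonoid. For `T₀^{±1}` this is
just a shift of the index `i`. For `g` (and symmetrically `g̃`), note that `C ⊆ [-1, 1]` contains
`0` and is `T₀`-invariant, so the pieces `T₀^[i] '' (C₁ ∪ C₋₁)` with `i ≥ 0` lie in `C`, where
`g = T₁` sends them into `C₁`, while those with `i < 0` lie in `|x| ≥ 98`, where `g` is the
identity.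
-/

open Set

def Function.End.mapsToSubmonoid {α : Type*} (s : Set α) : Submonoid (Function.End α) where
  carrier := {f | MapsTo f s s}
  mul_mem' hf hg := hf.comp hg
  one_mem' := mapsTo_id s

lemma T0_iterate (n : ℕ) (x : ℝ) : T0^[n] x = x / 100 ^ n := by
  induction n with
  | zero => simp
  | succ n ih => rw [Function.iterate_succ_apply', ih, T0, pow_succ, div_div]

lemma T0inv_iterate (n : ℕ) (x : ℝ) : T0inv^[n] x = 100 ^ n * x := by
  induction n with
  | zero => simp
  | succ n ih => rw [Function.iterate_succ_apply', ih, T0inv, pow_succ', mul_assoc]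

lemma T0z_apply (i : ℤ) (x : ℝ) : T0z i x = (100 : ℝ) ^ (-i) * x := by
  cases i with
  | ofNat n =>
    rw [Int.ofNat_eq_natCast, zpow_neg, zpow_natCast, ← div_eq_inv_mul]
    exact T0_iterate n x
  | negSucc n =>
    rw [Int.neg_negSucc, zpow_natCast]
    exact T0inv_iterate (n + 1) x

lemma T0_T0z (i : ℤ) (x : ℝ) : T0 (T0z i x) = T0z (i + 1) x := by
  rw [T0z_apply, T0z_apply, T0, neg_add, zpow_add₀ (by norm_num), zpow_neg_one]
  ring

lemma T0inv_T0z (i : ℤ) (x : ℝ) : T0inv (T0z i x) = T0z (i - 1) x := by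
  rw [T0z_apply, T0z_apply, T0inv, neg_sub, sub_eq_neg_add, zpow_add₀ (by norm_num), zpow_one]
  ring

section SelfSimilar

variable {C : Set ℝ}

/-- The maximum of `C` is the image of a point of `C` under one of the contractions, which
moves points above `1` strictly down; hence the maximum is at most `1` (and dually). -/
lemma subset_Icc_of_subset_union (hne : C.Nonempty) (hcomp : IsCompact C)
    (hC : C ⊆ Tm1 '' C ∪ T0 '' C ∪ T1 '' C) : C ⊆ Icc (-1) 1 := by
  have hmax : sSup C ≤ 1 := by
    have hle : ∀ y ∈ C, y ≤ sSup C := fun y hy => le_csSup hcomp.bddAbove hy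
    have hs : sSup C ∈ Tm1 '' C ∪ T0 '' C ∪ T1 '' C := hC (hcomp.sSup_mem hne)
    rcases hs with (⟨x, hx, hxe⟩ | ⟨x, hx, hxe⟩) | ⟨x, hx, hxe⟩ <;>
      have := hle x hx <;> simp only [Tm1, T0, T1] at hxe <;> linarith
  have hmin : -1 ≤ sInf C := by
    have hle : ∀ y ∈ C, sInf C ≤ y := fun y hy => csInf_le hcomp.bddBelow hy
    have hs : sInf C ∈ Tm1 '' C ∪ T0 '' C ∪ T1 '' C := hC (hcomp.sInf_mem hne)
    rcases hs with (⟨x, hx, hxe⟩ | ⟨x, hx, hxe⟩) | ⟨x, hx, hxe⟩ <;>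
      have := hle x hx <;> simp only [Tm1, T0, T1] at hxe <;> linarith
  exact fun y hy => ⟨hmin.trans (csInf_le hcomp.bddBelow hy),
    (le_csSup hcomp.bddAbove hy).trans hmax⟩

lemma zero_mem_of_mapsTo_T0 (hne : C.Nonempty) (hclosed : IsClosed C) (hT0 : MapsTo T0 C C) :
    (0 : ℝ) ∈ C := by
  obtain ⟨w, hw⟩ := hne
  have htend : Filter.Tendsto (fun n : ℕ => w / 100 ^ n) Filter.atTop (nhds 0) :=
    tendsto_const_nhds.div_atTop (tendsto_pow_atTop_atTop_of_one_lt (by norm_num))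
  refine hclosed.mem_of_tendsto htend (Filter.Eventually.of_forall fun n => ?_)
  rw [← T0_iterate]
  exact hT0.iterate n hw

end SelfSimilar

section Kplus

variable {C : Set ℝ}

lemma T0z_mem_Kplus (i : ℤ) {y : ℝ} (hy : y ∈ T1 '' C ∪ Tm1 '' C) : T0z i y ∈ Kplus C :=
  Or.inr (mem_iUnion.2 ⟨i, y, hy, rfl⟩)

lemma mem_Kplus_of_mem_union {y : ℝ} (hy : y ∈ T1 '' C ∪ Tm1 '' C) : y ∈ Kplus C :=
  T0z_mem_Kplus 0 hy

lemma mapsTo_T0_Kplus : MapsTo T0 (Kplus C) (Kplus C) := by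
  rintro z (rfl | hz)
  · exact Or.inl (by simp [T0])
  · obtain ⟨i, y, hy, rfl⟩ := mem_iUnion.1 hz
    rw [T0_T0z]
    exact T0z_mem_Kplus _ hy

lemma mapsTo_T0inv_Kplus : MapsTo T0inv (Kplus C) (Kplus C) := by
  rintro z (rfl | hz)
  · exact Or.inl (by simp [T0inv])
  · obtain ⟨i, y, hy, rfl⟩ := mem_iUnion.1 hz
    rw [T0inv_T0z]
    exact T0z_mem_Kplus _ hy

lemma le_abs_of_mem_union (hC : C ⊆ Icc (-1) 1) {y : ℝ} (hy : y ∈ T1 '' C ∪ Tm1 '' C) :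
    98 / 100 ≤ |y| := by
  rcases hy with ⟨x, hx, rfl⟩ | ⟨x, hx, rfl⟩ <;> obtain ⟨h₁, h₂⟩ := hC hx
  · rw [le_abs]; left; simp only [T1]; linarith
  · rw [le_abs]; right; simp only [Tm1]; linarith

lemma Kplus_subset (hC : C ⊆ Icc (-1) 1) (h0 : 0 ∈ C) (hT0 : MapsTo T0 C C)
    (hT1 : MapsTo T1 C C) (hTm1 : MapsTo Tm1 C C) : Kplus C ⊆ C ∪ {z | 98 ≤ |z|} := by
  rintro z (rfl | hz)
  · exact Or.inl h0
  obtain ⟨i, y, hy, rfl⟩ := mem_iUnion.1 hz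
  rcases le_or_gt 0 i with hi | hi
  · lift i to ℕ using hi
    have hyC : y ∈ C := by rcases hy with ⟨x, hx, rfl⟩ | ⟨x, hx, rfl⟩; exacts [hT1 hx, hTm1 hx]
    exact Or.inl (hT0.iterate i hyC)
  · right
    have hpow : (100 : ℝ) ≤ 100 ^ (-i) := by
      simpa using zpow_le_zpow_right₀ (a := (100 : ℝ)) (by norm_num) (by omega : (1 : ℤ) ≤ -i)
    have hy98 := le_abs_of_mem_union hC hy
    rw [mem_ofPred_eq, T0z_apply, abs_mul, abs_of_pos (by positivity)]
    nlinarith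

lemma mapsTo_Kplus_of_mapsTo_union {f : ℝ → ℝ} (hK : Kplus C ⊆ C ∪ {z | 98 ≤ |z|})
    (hfC : MapsTo f C (T1 '' C ∪ Tm1 '' C)) (hf : ∀ z, 98 ≤ |z| → f z = z) :
    MapsTo f (Kplus C) (Kplus C) := by
  intro z hz
  rcases hK hz with hzC | hz98
  · exact mem_Kplus_of_mem_union (hfC hzC)
  · rw [hf z hz98]
    exact hz

end Kplus

lemma neg_T1_neg (x : ℝ) : -T1 (-x) = Tm1 x := by
  simp only [T1, Tm1]
  ring

theorem stmt_14 (C : Set ℝ) (hne : C.Nonempty) (hcomp : IsCompact C)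
    (hself : C = Tm1 '' C ∪ T0 '' C ∪ T1 '' C)
    (g : ℝ → ℝ)
    (hg_id : ∀ x : ℝ, x < -10 ∨ 1 < x → g x = x)
    (hg_T1 : ∀ x ∈ Set.Icc (-1 : ℝ) 1, g x = T1 x) :
    ∀ f ∈ Submonoid.closure ({T0, T0inv, g, fun x => -g (-x)} : Set (Function.End ℝ)),
      f '' Kplus C ⊆ Kplus C := by
  have hC := subset_Icc_of_subset_union hne hcomp hself.le
  have hTm1 : MapsTo Tm1 C C := fun x hx => hself.ge (Or.inl (Or.inl (mem_image_of_mem _ hx)))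
  have hT0 : MapsTo T0 C C := fun x hx => hself.ge (Or.inl (Or.inr (mem_image_of_mem _ hx)))
  have hT1 : MapsTo T1 C C := fun x hx => hself.ge (Or.inr (mem_image_of_mem _ hx))
  have hK := Kplus_subset hC (zero_mem_of_mapsTo_T0 hne hcomp.isClosed hT0) hT0 hT1 hTm1
  have hg_far : ∀ z, 98 ≤ |z| → g z = z := fun z hz =>
    hg_id z (by rcases le_abs'.1 hz with h | h <;> [left; right] <;> linarith)
  intro f hf
  refine MapsTo.image_subset <| (Submonoid.closure_le
    (S := Function.End.mapsToSubmonoid (Kplus C))).2 ?_ hf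
  rintro _ (rfl | rfl | rfl | rfl)
  · exact mapsTo_T0_Kplus
  · exact mapsTo_T0inv_Kplus
  · refine mapsTo_Kplus_of_mapsTo_union hK (fun z hz => ?_) hg_far
    rw [hg_T1 z (hC hz)]
    exact Or.inl (mem_image_of_mem _ hz)
  · refine mapsTo_Kplus_of_mapsTo_union hK (fun z hz => ?_) fun z hz => ?_
    · have hz' : -z ∈ Icc (-1 : ℝ) 1 := by obtain ⟨h₁, h₂⟩ := hC hz; constructor <;> linarith
      rw [hg_T1 (-z) hz', neg_T1_neg]
      exact Or.inr (mem_image_of_mem _ hz)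
    · rw [hg_far (-z) (by rwa [abs_neg]), neg_neg]
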